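/- In a sequentiable structure, if m₁∘x = m₂∘y for elements m₁, m₂, x, y ∈ M, then m₁ and m₂ are comparable in the prefix order: m₁ ≤ m₂ or m₂ ≤ m₁. -/

import Mathlib

/-!
Write `m₁ = g * a`, `m₂ = g * b` with `g = m₁ ⊓ m₂`. Maximality of `g` forces `a ⊓ b = e`, and left
cancellation turns `m₁ * x = m₂ * y` into `a * x = b * y`. If both `a` and `b` were nontrivial,
the axiom of sequentiable structures applied to `a ≤ a * x` and `b ≤ a * x` would give
`(a * x) ⊓ (a * x) = e`, i.e. `a * x = e`, which the norm rules out. So `a = e` or `b = e`.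
-/

/-- The prefix relation in a monoid: `a ≤ b` iff `∃ c, a * c = b`. -/
def pref {M : Type*} [Monoid M] (a b : M) : Prop := ∃ c, a * c = b

section Sequentiable

variable {M : Type*} [Monoid M]

theorem pref_refl (a : M) : pref a a := ⟨1, mul_one a⟩

theorem pref_mul_left {a b : M} (g : M) (h : pref a b) : pref (g * a) (g * b) := by
  obtain ⟨c, rfl⟩ := h
  exact ⟨c, mul_assoc g a c⟩

theorem eq_one_of_mul_eq_one_of_norm (norm : M → ℝ) (hnn : ∀ a : M, 0 ≤ norm a)
    (hmul : ∀ a b : M, norm (a * b) = norm a + norm b) (hker : ∀ a : M, norm a = 0 → a = 1)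
    {a b : M} (h : a * b = 1) : a = 1 := by
  have hone : norm 1 = 0 := by simpa using hmul 1 1
  apply hker
  linarith [hmul a b, hnn a, hnn b, congrArg norm h]

theorem eq_one_of_meet_self_eq_one (meet : M → M → M)
    (hconical : ∀ a b : M, a * b = 1 → a = 1)
    (hm3 : ∀ a b c : M, pref c a → pref c b → pref c (meet a b))
    {c : M} (hc : meet c c = 1) : c = 1 := by
  obtain ⟨e, he⟩ := hm3 c c c (pref_refl c) (pref_refl c)
  exact hconical c e (he.trans hc)

theorem meet_eq_one_of_meet_mul_eq (meet : M → M → M)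
    (hlc : ∀ a b c : M, a * b = a * c → b = c) (hconical : ∀ a b : M, a * b = 1 → a = 1)
    (hm1 : ∀ a b : M, pref (meet a b) a) (hm2 : ∀ a b : M, pref (meet a b) b)
    (hm3 : ∀ a b c : M, pref c a → pref c b → pref c (meet a b))
    {g a b : M} (hg : meet (g * a) (g * b) = g) : meet a b = 1 := by
  have hdiv := hm3 _ _ _ (pref_mul_left g (hm1 a b)) (pref_mul_left g (hm2 a b))
  rw [hg] at hdiv
  obtain ⟨e, he⟩ := hdiv
  exact hconical _ e (hlc g _ _ (by rw [← mul_assoc, he, mul_one]))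

/-- The Levi-type property of sequentiable structures. -/
theorem eq_one_or_eq_one_of_meet_eq_one (meet : M → M → M)
    (hconical : ∀ a b : M, a * b = 1 → a = 1)
    (hm3 : ∀ a b c : M, pref c a → pref c b → pref c (meet a b))
    (hseq : ∀ a b c d : M, a ≠ 1 → b ≠ 1 → c ≠ 1 → d ≠ 1 →
      pref a c → pref b d → meet a b = 1 → meet c d = 1)
    {a b x y : M} (hab : meet a b = 1) (h : a * x = b * y) : a = 1 ∨ b = 1 := by
  by_contra! hne
  have hax : a * x ≠ 1 := fun hax => hne.1 (hconical a x hax)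
  have hmeet := hseq a b (a * x) (a * x) hne.1 hne.2 hax hax ⟨x, rfl⟩ ⟨y, h.symm⟩ hab
  exact hax (eq_one_of_meet_self_eq_one meet hconical hm3 hmeet)

end Sequentiable

theorem prefixComparable_general {M : Type*} [Monoid M]
    (norm : M → ℝ) (meet : M → M → M)
    (hlc : ∀ a b c : M, a * b = a * c → b = c)
    (hnn : ∀ a : M, 0 ≤ norm a)
    (hmul : ∀ a b : M, norm (a * b) = norm a + norm b)
    (hker : ∀ a : M, norm a = 0 → a = 1)
    (hm1 : ∀ a b : M, pref (meet a b) a)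
    (hm2 : ∀ a b : M, pref (meet a b) b)
    (hm3 : ∀ a b c : M, pref c a → pref c b → pref c (meet a b))
    (hseq : ∀ a b c d : M, a ≠ 1 → b ≠ 1 → c ≠ 1 → d ≠ 1 →
      pref a c → pref b d → meet a b = 1 → meet c d = 1)
    (m₁ m₂ x y : M) (h : m₁ * x = m₂ * y) :
    pref m₁ m₂ ∨ pref m₂ m₁ := by
  have hconical : ∀ a b : M, a * b = 1 → a = 1 := fun a b =>
    eq_one_of_mul_eq_one_of_norm norm hnn hmul hker
  set g := meet m₁ m₂
  obtain ⟨a, ha⟩ := hm1 m₁ m₂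
  obtain ⟨b, hb⟩ := hm2 m₁ m₂
  have hab : meet a b = 1 :=
    meet_eq_one_of_meet_mul_eq meet hlc hconical hm1 hm2 hm3 (g := g) (by rw [ha, hb])
  have hcommon : a * x = b * y := hlc g _ _ (by rw [← mul_assoc, ha, ← mul_assoc, hb, h])
  rcases eq_one_or_eq_one_of_meet_eq_one meet hconical hm3 hseq hab hcommon with rfl | rfl
  · exact Or.inl ⟨b, by rw [← ha, mul_one, hb]⟩
  · exact Or.inr ⟨a, by rw [← hb, mul_one, ha]⟩

/-- In a sequentiable structure, elements with a common right multiple are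
comparable in the prefix order. -/
theorem prefixComparable {M : Type*} [Monoid M]
    (norm : M → ℝ) (meet : M → M → M)
    (hlc : ∀ a b c : M, a * b = a * c → b = c)
    (hnn : ∀ a : M, 0 ≤ norm a)
    (hmul : ∀ a b : M, norm (a * b) = norm a + norm b)
    (hone : norm 1 = 0)
    (hker : ∀ a : M, norm a = 0 → a = 1)
    (hm1 : ∀ a b : M, pref (meet a b) a)
    (hm2 : ∀ a b : M, pref (meet a b) b)
    (hm3 : ∀ a b c : M, pref c a → pref c b → pref c (meet a b))
    (hseq : ∀ a b c d : M, a ≠ 1 → b ≠ 1 → c ≠ 1 → d ≠ 1 →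
      pref a c → pref b d → meet a b = 1 → meet c d = 1)
    (m₁ m₂ x y : M) (h : m₁ * x = m₂ * y) :
    pref m₁ m₂ ∨ pref m₂ m₁ :=
  prefixComparable_general norm meet hlc hnn hmul hker hm1 hm2 hm3 hseq m₁ m₂ x y h
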